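/- Let F be a number field, p a prime ideal of O_F, and c, d ∈ F not both zero with m = <c,d> the fractional ideal they generate. Let n = ord_p(m) = min(ord_p(c), ord_p(d)). Suppose a, b ∈ F with ad - bc = 1 and ac, ad, bc, bd ∈ O_F, and let A = [[a,b],[c,d]]. If x, y, z, w ∈ F satisfy ord_p(x) ≥ 0, ord_p(w) ≥ 0, ord_p(y) ≥ -2n, ord_p(z) ≥ 2n, then all entries of A^{-1}[[x,y],[z,w]]A have nonnegative p-adic valuation. -/

import Mathlib

open IsDedekindDomain NumberField

open scoped Classical in
/-- The `p`-adic order `ord_p : F → WithTop ℤ` attached to a prime `p` of the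
ring of integers of a number field `F`, with the convention `ord_p(0) = ⊤`. -/
noncomputable def ordp {F : Type*} [Field F] [NumberField F]
    (v : HeightOneSpectrum (𝓞 F)) (x : F) : WithTop ℤ :=
  if hx : x = 0 then ⊤
  else (((-Multiplicative.toAdd (WithZero.unzero
    ((Valuation.ne_zero_iff (v.valuation F)).mpr hx))) : ℤ) : WithTop ℤ)

section Helpers
variable {F : Type*} [Field F] [NumberField F] (v : HeightOneSpectrum (𝓞 F))

lemma ordp_zero : ordp v (0 : F) = ⊤ := by unfold ordp; simp

lemma ordp_def_ne {x : F} (hx : x ≠ 0) : ordp v x =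
    (((-Multiplicative.toAdd (WithZero.unzero
      ((Valuation.ne_zero_iff (v.valuation F)).mpr hx))) : ℤ) : WithTop ℤ) := by
  unfold ordp; rw [dif_neg hx]

lemma ordp_mul (x y : F) : ordp v (x * y) = ordp v x + ordp v y := by
  rcases eq_or_ne x 0 with rfl | hx
  · simp [ordp_zero]
  rcases eq_or_ne y 0 with rfl | hy
  · simp [ordp_zero]
  have hxy : x * y ≠ 0 := mul_ne_zero hx hy
  rw [ordp_def_ne v hx, ordp_def_ne v hy, ordp_def_ne v hxy]
  have h : WithZero.unzero ((Valuation.ne_zero_iff (v.valuation F)).mpr hxy)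
      = WithZero.unzero ((Valuation.ne_zero_iff (v.valuation F)).mpr hx)
      * WithZero.unzero ((Valuation.ne_zero_iff (v.valuation F)).mpr hy) := by
    rw [← WithZero.coe_inj]
    push_cast [WithZero.coe_unzero]
    exact map_mul _ _ _
  rw [h, toAdd_mul, neg_add, ← WithTop.coe_add]

lemma ordp_le_of_val_le {x y : F} (h : v.valuation F x ≤ v.valuation F y) :
    ordp v y ≤ ordp v x := by
  rcases eq_or_ne x 0 with rfl | hx
  · rw [ordp_zero]; exact le_top
  have hy : y ≠ 0 := by
    intro hy; subst hy
    rw [map_zero, le_zero_iff] at h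
    exact hx ((Valuation.zero_iff _).mp h)
  rw [ordp_def_ne v hx, ordp_def_ne v hy, WithTop.coe_le_coe, neg_le_neg_iff,
    Multiplicative.toAdd_le, ← WithZero.coe_le_coe, WithZero.coe_unzero,
    WithZero.coe_unzero]
  exact h

lemma ordp_eq_of_val_eq {x y : F} (h : v.valuation F x = v.valuation F y) :
    ordp v x = ordp v y :=
  le_antisymm (ordp_le_of_val_le v h.ge) (ordp_le_of_val_le v h.le)

lemma ordp_neg (x : F) : ordp v (-x) = ordp v x :=
  ordp_eq_of_val_eq v (Valuation.map_neg _ _)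

lemma min_le_ordp_add (x y : F) : min (ordp v x) (ordp v y) ≤ ordp v (x + y) := by
  have h := (v.valuation F).map_add x y
  rcases le_total (v.valuation F x) (v.valuation F y) with hc | hc
  · exact le_trans (min_le_right _ _)
      (ordp_le_of_val_le v (le_trans h (by rw [max_eq_right hc])))
  · exact le_trans (min_le_left _ _)
      (ordp_le_of_val_le v (le_trans h (by rw [max_eq_left hc])))

lemma ordp_add_nonneg {x y : F} (hx : 0 ≤ ordp v x) (hy : 0 ≤ ordp v y) :
    0 ≤ ordp v (x + y) :=
  le_trans (le_min hx hy) (min_le_ordp_add v x y)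

lemma ordp_nonneg_of_integral {x : F}
    (h : ∃ t : 𝓞 F, (algebraMap (𝓞 F) F) t = x) : 0 ≤ ordp v x := by
  obtain ⟨t, rfl⟩ := h
  rcases eq_or_ne ((algebraMap (𝓞 F) F) t) 0 with h0 | h0
  · rw [h0, ordp_zero]; exact le_top
  rw [ordp_def_ne v h0]
  have hle : v.valuation F ((algebraMap (𝓞 F) F) t) ≤ 1 := v.valuation_le_one t
  have : WithZero.unzero ((Valuation.ne_zero_iff (v.valuation F)).mpr h0) ≤ 1 := by
    rw [← WithZero.coe_le_coe, WithZero.coe_unzero, WithZero.coe_one]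
    exact hle
  have := Multiplicative.toAdd_le.mpr this
  rw [toAdd_one] at this
  have h2 : (0:ℤ) ≤ -Multiplicative.toAdd (WithZero.unzero
      ((Valuation.ne_zero_iff (v.valuation F)).mpr h0)) := by omega
  exact_mod_cast h2

end Helpers


section Helpers2
variable {F : Type*} [Field F] [NumberField F] (v : HeightOneSpectrum (𝓞 F))

lemma withtop_neg_le_of_nonneg_add {A : WithTop ℤ} {n : ℤ}
    (h : 0 ≤ A + (n : WithTop ℤ)) : ((-n : ℤ) : WithTop ℤ) ≤ A := by
  induction A using WithTop.recTopCoe with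
  | top => exact le_top
  | coe a =>
    rw [← WithTop.coe_add] at h
    rw [WithTop.coe_le_coe]
    have : (0:ℤ) ≤ a + n := by exact_mod_cast h
    omega

lemma ordp_tri {p q r : F} {i j k : ℤ}
    (hp : (i : WithTop ℤ) ≤ ordp v p) (hq : (j : WithTop ℤ) ≤ ordp v q)
    (hr : (k : WithTop ℤ) ≤ ordp v r) (h : i + j + k = 0) :
    0 ≤ ordp v (p * q * r) := by
  rw [ordp_mul, ordp_mul]
  have h2 := add_le_add (add_le_add hp hq) hr
  have h0 : (0 : WithTop ℤ) = (i : WithTop ℤ) + (j : WithTop ℤ) + (k : WithTop ℤ) := by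
    rw [← WithTop.coe_add, ← WithTop.coe_add, h]; rfl
  rw [h0]; exact h2

end Helpers2


/-- Let `A = [[a,b],[c,d]] ∈ SL₂(F)` be quasi-integral, `n = min(ord_p(c), ord_p(d))`,
and `[[x,y],[z,w]]` with `ord_p(x) ≥ 0`, `ord_p(w) ≥ 0`, `ord_p(y) ≥ -2n`,
`ord_p(z) ≥ 2n`. Then every entry of `A⁻¹ [[x,y],[z,w]] A` has nonnegative
`p`-adic valuation. -/
theorem conjugated_matrix_entries_integral {F : Type*} [Field F] [NumberField F]
    (v : HeightOneSpectrum (𝓞 F)) (a b c d : F) (hdet : a * d - b * c = 1)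
    (hac : ∃ t : 𝓞 F, (algebraMap (𝓞 F) F) t = a * c)
    (had : ∃ t : 𝓞 F, (algebraMap (𝓞 F) F) t = a * d)
    (hbc : ∃ t : 𝓞 F, (algebraMap (𝓞 F) F) t = b * c)
    (hbd : ∃ t : 𝓞 F, (algebraMap (𝓞 F) F) t = b * d)
    (n : ℤ) (hn : min (ordp v c) (ordp v d) = (n : WithTop ℤ))
    (x y z w : F)
    (hx : 0 ≤ ordp v x) (hw : 0 ≤ ordp v w)
    (hy : ((-(2 * n) : ℤ) : WithTop ℤ) ≤ ordp v y)
    (hz : (((2 * n) : ℤ) : WithTop ℤ) ≤ ordp v z) :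
    0 ≤ ordp v (-(z * a * b) + x * a * d - w * b * c + y * c * d) ∧
    0 ≤ ordp v (-(w * b * d) + x * b * d - z * b ^ 2 + y * d ^ 2) ∧
    0 ≤ ordp v (w * a * c - x * a * c + z * a ^ 2 - y * c ^ 2) ∧
    0 ≤ ordp v (z * a * b + w * a * d - x * b * c - y * c * d) := by
  have hx0 : ((0 : ℤ) : WithTop ℤ) ≤ ordp v x := by exact_mod_cast hx
  have hw0 : ((0 : ℤ) : WithTop ℤ) ≤ ordp v w := by exact_mod_cast hw
  have hCn : (n : WithTop ℤ) ≤ ordp v c := hn ▸ min_le_left _ _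
  have hDn : (n : WithTop ℤ) ≤ ordp v d := hn ▸ min_le_right _ _
  -- a and b have order ≥ -n
  have hAB : ((-n : ℤ) : WithTop ℤ) ≤ ordp v a ∧ ((-n : ℤ) : WithTop ℤ) ≤ ordp v b := by
    rcases min_choice (ordp v c) (ordp v d) with hmc | hmc
    · have hc : ordp v c = (n : WithTop ℤ) := by rw [← hmc.symm.trans hn]
      constructor
      · have h0 := ordp_nonneg_of_integral v hac
        rw [ordp_mul, hc] at h0
        exact withtop_neg_le_of_nonneg_add h0
      · have h0 := ordp_nonneg_of_integral v hbc
        rw [ordp_mul, hc] at h0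
        exact withtop_neg_le_of_nonneg_add h0
    · have hd : ordp v d = (n : WithTop ℤ) := by rw [← hmc.symm.trans hn]
      constructor
      · have h0 := ordp_nonneg_of_integral v had
        rw [ordp_mul, hd] at h0
        exact withtop_neg_le_of_nonneg_add h0
      · have h0 := ordp_nonneg_of_integral v hbd
        rw [ordp_mul, hd] at h0
        exact withtop_neg_le_of_nonneg_add h0
  obtain ⟨hA, hB⟩ := hAB
  refine ⟨?_, ?_, ?_, ?_⟩
  · rw [sub_eq_add_neg]
    refine ordp_add_nonneg v (ordp_add_nonneg v (ordp_add_nonneg v ?_ ?_) ?_) ?_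
    · rw [ordp_neg]; exact ordp_tri v hz hA hB (by ring)
    · exact ordp_tri v hx0 hA hDn (by ring)
    · rw [ordp_neg]; exact ordp_tri v hw0 hB hCn (by ring)
    · exact ordp_tri v hy hCn hDn (by ring)
  · rw [sub_eq_add_neg]
    refine ordp_add_nonneg v (ordp_add_nonneg v (ordp_add_nonneg v ?_ ?_) ?_) ?_
    · rw [ordp_neg]; exact ordp_tri v hw0 hB hDn (by ring)
    · exact ordp_tri v hx0 hB hDn (by ring)
    · rw [ordp_neg, sq, ← mul_assoc]; exact ordp_tri v hz hB hB (by ring)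
    · rw [sq, ← mul_assoc]; exact ordp_tri v hy hDn hDn (by ring)
  · rw [sub_eq_add_neg, sub_eq_add_neg]
    refine ordp_add_nonneg v (ordp_add_nonneg v (ordp_add_nonneg v ?_ ?_) ?_) ?_
    · exact ordp_tri v hw0 hA hCn (by ring)
    · rw [ordp_neg]; exact ordp_tri v hx0 hA hCn (by ring)
    · rw [sq, ← mul_assoc]; exact ordp_tri v hz hA hA (by ring)
    · rw [ordp_neg, sq, ← mul_assoc]; exact ordp_tri v hy hCn hCn (by ring)
  · rw [sub_eq_add_neg, sub_eq_add_neg]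
    refine ordp_add_nonneg v (ordp_add_nonneg v (ordp_add_nonneg v ?_ ?_) ?_) ?_
    · exact ordp_tri v hz hA hB (by ring)
    · exact ordp_tri v hw0 hA hDn (by ring)
    · rw [ordp_neg]; exact ordp_tri v hx0 hB hCn (by ring)
    · rw [ordp_neg]; exact ordp_tri v hy hCn hDn (by ring)
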